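/- arXiv:1705.03310 — 4 statements merged into one kernel-verified Lean document; each statement's English description precedes it below -/
import Mathlib

section
/- Let d ≥ 2 be an integer and let α ∈ (0,2) satisfy 2α < d. Then for every x ∈ ℝ^d with x ≠ 0, the convolution integral ∫_{ℝ^d} |x−y|^{α−d} |y|^{−2α} dy converges and one has s(α,d) · ((d−2α)/(d−α)) · (Γ((d−α)/2)/(π^{d/2} 2^α Γ(α/2))) · ∫_{ℝ^d} |x−y|^{α−d} |y|^{−2α} dy = |x|^{−α}. (This identity expresses that u_C(x) = s(α,d)|x|^{−α} is a stationary solution of the parabolic–elliptic Keller–Segel system with fractional diffusion of order α, via the Riesz potential ℐ_α, the inverse of (−Δ)^{α/2}.) -/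
/-!
Each power is subordinated to a Gaussian: `s ^ (-2a) Γ(a) = ∫₀^∞ t^(a-1) e^(-s² t) dt`.
By Tonelli the `y`-integral becomes a Gaussian integral, computed by completing the square
`t‖x - y‖² + u‖y‖² = (t + u)‖y - t/(t+u) • x‖² + tu/(t+u) ‖x‖²`. In the remaining integral
over `(t, u)` the substitution `u = t v` separates a Gamma integral in `t` from a Beta integral
in `v`. The result is
`∫ ‖x - y‖^(-2a) ‖y‖^(-2b) dy = π^(n/2) Γ(n/2-a) Γ(n/2-b) Γ(a+b-n/2) / (Γ(a) Γ(b) Γ(n-a-b))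
  · ‖x‖^(n-2a-2b)`,
and for `a = (d - α)/2`, `b = α` its constant cancels against `s(α,d)` by `Γ(z + 1) = z Γ(z)`.
-/

open MeasureTheory Real

/-- The constant `s(α,d)` of the singular stationary solution. -/
noncomputable def sConst (α : ℝ) (d : ℕ) : ℝ :=
  2 ^ α * Gamma ((d - α) / 2 + 1) * Gamma α / (Gamma ((d : ℝ) / 2 - α + 1) * Gamma (α / 2))

open Set Function
open scoped ENNReal

lemma lintegral_rpow_mul_exp_neg_mul_Ioi {a r : ℝ} (ha : 0 < a) (hr : 0 < r) :
    ∫⁻ t in Ioi 0, ENNReal.ofReal (t ^ (a - 1) * exp (-(r * t)))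
      = ENNReal.ofReal (r ^ (-a) * Gamma a) := by
  have hint : IntegrableOn (fun t : ℝ => t ^ (a - 1) * exp (-(r * t))) (Ioi 0) := by
    simpa using integrableOn_rpow_mul_exp_neg_mul_rpow (p := 1) (by linarith) one_pos hr
  rw [← ofReal_integral_eq_lintegral_ofReal hint
      (ae_restrict_of_forall_mem measurableSet_Ioi fun t (ht : 0 < t) => by positivity),
    integral_rpow_mul_exp_neg_mul_Ioi ha hr, one_div, inv_rpow hr.le, ← rpow_neg hr.le]

lemma lintegral_rpow_mul_exp_neg_sq_mul_Ioi {a s : ℝ} (ha : 0 < a) (hs : 0 < s) :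
    ∫⁻ t in Ioi 0, ENNReal.ofReal (t ^ (a - 1) * exp (-(s ^ 2 * t)))
      = ENNReal.ofReal (s ^ (-(2 * a)) * Gamma a) := by
  rw [lintegral_rpow_mul_exp_neg_mul_Ioi ha (by positivity), ← rpow_two, ← rpow_mul hs.le]
  ring_nf

lemma lintegral_Ioi_Ioi_rpow_mul_exp_neg_sq_mul {a b r s : ℝ} (ha : 0 < a) (hb : 0 < b)
    (hr : 0 < r) (hs : 0 < s) :
    ∫⁻ t in Ioi 0, ∫⁻ u in Ioi 0, ENNReal.ofReal (t ^ (a - 1) * u ^ (b - 1))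
        * ENNReal.ofReal (exp (-(r ^ 2 * t + s ^ 2 * u)))
      = ENNReal.ofReal (Gamma a * Gamma b * (r ^ (-(2 * a)) * s ^ (-(2 * b)))) := by
  have hsplit (t : ℝ) (ht : 0 < t) (u : ℝ) (hu : 0 < u) :
      ENNReal.ofReal (t ^ (a - 1) * u ^ (b - 1)) * ENNReal.ofReal (exp (-(r ^ 2 * t + s ^ 2 * u)))
        = ENNReal.ofReal (t ^ (a - 1) * exp (-(r ^ 2 * t)))
          * ENNReal.ofReal (u ^ (b - 1) * exp (-(s ^ 2 * u))) := by
    rw [← ENNReal.ofReal_mul (by positivity), ← ENNReal.ofReal_mul (by positivity), neg_add,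
      exp_add]
    ring_nf
  rw [setLIntegral_congr_fun measurableSet_Ioi fun t ht =>
      setLIntegral_congr_fun measurableSet_Ioi (hsplit t ht),
    lintegral_lintegral_mul (by fun_prop) (by fun_prop),
    lintegral_rpow_mul_exp_neg_sq_mul_Ioi ha hr, lintegral_rpow_mul_exp_neg_sq_mul_Ioi hb hs,
    ← ENNReal.ofReal_mul (by positivity)]
  ring_nf

lemma setLIntegral_Ioi_eq_ofReal_mul_setLIntegral_comp_mul_left (f : ℝ → ℝ≥0∞) {c : ℝ}
    (hc : 0 < c) :
    ∫⁻ u in Ioi 0, f u = ENNReal.ofReal c * ∫⁻ v in Ioi 0, f (c * v) := by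
  have hderiv (v : ℝ) : HasDerivWithinAt (c * ·) c (Ioi 0) v := by
    simpa using ((hasDerivAt_id v).const_mul c).hasDerivWithinAt
  conv_lhs => rw [← image_const_mul_Ioi_zero hc, lintegral_image_eq_lintegral_abs_deriv_mul
    measurableSet_Ioi (fun v _ => hderiv v) (mul_right_injective₀ hc.ne').injOn]
  rw [abs_of_pos hc, lintegral_const_mul' _ _ ENNReal.ofReal_ne_top]

lemma lintegral_rpow_mul_one_add_rpow_neg_Ioi {a b : ℝ} (ha : 0 < a) (hb : 0 < b) :
    ∫⁻ v in Ioi 0, ENNReal.ofReal (v ^ (a - 1) * (1 + v) ^ (-(a + b)))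
      = ENNReal.ofReal (Gamma a * Gamma b / Gamma (a + b)) := by
  have hG : 0 < Gamma (a + b) := Gamma_pos_of_pos (by linarith)
  refine (ENNReal.mul_right_inj (a := ENNReal.ofReal (Gamma (a + b))) (by simpa using hG)
    ENNReal.ofReal_ne_top).1 ?_
  set F : ℝ → ℝ → ℝ≥0∞ := fun v t =>
    ENNReal.ofReal (v ^ (a - 1) * (t ^ (a + b - 1) * exp (-((1 + v) * t))))
  have inner_t (v : ℝ) (hv : 0 < v) : ENNReal.ofReal (Gamma (a + b))
      * ENNReal.ofReal (v ^ (a - 1) * (1 + v) ^ (-(a + b))) = ∫⁻ t in Ioi 0, F v t := by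
    simp_rw [F, ENNReal.ofReal_mul (rpow_nonneg hv.le _)]
    rw [lintegral_const_mul' _ _ ENNReal.ofReal_ne_top,
      lintegral_rpow_mul_exp_neg_mul_Ioi (by linarith) (by linarith),
      ENNReal.ofReal_mul (by positivity)]
    ring
  have inner_v (t : ℝ) (ht : 0 < t) : ∫⁻ v in Ioi 0, F v t
      = ENNReal.ofReal (Gamma a) * ENNReal.ofReal (t ^ (b - 1) * exp (-(1 * t))) := by
    calc ∫⁻ v in Ioi 0, F v t
        = ∫⁻ v in Ioi 0, ENNReal.ofReal (t ^ (a + b - 1) * exp (-t))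
            * ENNReal.ofReal (v ^ (a - 1) * exp (-(t * v))) := by
          refine setLIntegral_congr_fun measurableSet_Ioi fun v (hv : 0 < v) => ?_
          simp only [F]
          rw [← ENNReal.ofReal_mul (by positivity), show -((1 + v) * t) = -t + -(t * v) by ring,
            exp_add]
          ring_nf
      _ = ENNReal.ofReal (Gamma a) * ENNReal.ofReal (t ^ (b - 1) * exp (-(1 * t))) := by
          rw [lintegral_const_mul' _ _ ENNReal.ofReal_ne_top,
            lintegral_rpow_mul_exp_neg_mul_Ioi ha ht, ← ENNReal.ofReal_mul (by positivity),
            ← ENNReal.ofReal_mul (Gamma_pos_of_pos ha).le,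
            show b - 1 = (a + b - 1) + -a by ring, rpow_add ht, one_mul]
          ring_nf
  calc ENNReal.ofReal (Gamma (a + b))
        * ∫⁻ v in Ioi 0, ENNReal.ofReal (v ^ (a - 1) * (1 + v) ^ (-(a + b)))
      = ∫⁻ v in Ioi 0, ∫⁻ t in Ioi 0, F v t := by
        rw [← lintegral_const_mul' _ _ ENNReal.ofReal_ne_top]
        exact setLIntegral_congr_fun measurableSet_Ioi inner_t
    _ = ∫⁻ t in Ioi 0, ∫⁻ v in Ioi 0, F v t :=
        lintegral_lintegral_swap (Measurable.aemeasurable (by fun_prop))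
    _ = ENNReal.ofReal (Gamma a)
          * ∫⁻ t in Ioi 0, ENNReal.ofReal (t ^ (b - 1) * exp (-(1 * t))) := by
        rw [setLIntegral_congr_fun measurableSet_Ioi inner_v,
          lintegral_const_mul' _ _ ENNReal.ofReal_ne_top]
    _ = ENNReal.ofReal (Gamma (a + b)) * ENNReal.ofReal (Gamma a * Gamma b / Gamma (a + b)) := by
        rw [lintegral_rpow_mul_exp_neg_mul_Ioi hb one_pos, one_rpow, one_mul,
          ← ENNReal.ofReal_mul (Gamma_pos_of_pos ha).le, ← ENNReal.ofReal_mul hG.le,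
          mul_div_cancel₀ _ hG.ne']

lemma lintegral_Ioi_Ioi_eq_Gamma_mul_beta {a b κ c : ℝ} (hc : 0 < c) (ha : a < κ) (hb : b < κ)
    (hab : κ < a + b) :
    ∫⁻ t in Ioi 0, ∫⁻ u in Ioi 0,
        ENNReal.ofReal (t ^ (a - 1) * u ^ (b - 1) * (t + u) ^ (-κ) * exp (-(t * u / (t + u) * c)))
      = ENNReal.ofReal (Gamma (a + b - κ) * c ^ (-(a + b - κ))
          * (Gamma (κ - a) * Gamma (κ - b) / Gamma (2 * κ - a - b))) := by
  have hp : 0 < a + b - κ := by linarith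
  set H : ℝ → ℝ → ℝ≥0∞ := fun v t => ENNReal.ofReal (v ^ (b - 1) * (1 + v) ^ (-κ)
    * (t ^ (a + b - κ - 1) * exp (-(v / (1 + v) * c * t))))
  have inner_u (t : ℝ) (ht : 0 < t) : ∫⁻ u in Ioi 0,
      ENNReal.ofReal (t ^ (a - 1) * u ^ (b - 1) * (t + u) ^ (-κ) * exp (-(t * u / (t + u) * c)))
        = ∫⁻ v in Ioi 0, H v t := by
    rw [setLIntegral_Ioi_eq_ofReal_mul_setLIntegral_comp_mul_left _ ht,
      ← lintegral_const_mul' _ _ ENNReal.ofReal_ne_top]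
    refine setLIntegral_congr_fun measurableSet_Ioi fun v (hv : 0 < v) => ?_
    rw [← ENNReal.ofReal_mul ht.le]
    congr 1
    rw [show t + t * v = t * (1 + v) by ring, mul_rpow ht.le hv.le, mul_rpow ht.le (by positivity),
      show t * (t * v) / (t * (1 + v)) * c = v / (1 + v) * c * t by field_simp,
      show a + b - κ - 1 = (a - 1) + (b - 1) + -κ + 1 by ring, rpow_add ht, rpow_add ht,
      rpow_add ht, rpow_one]
    ring
  have inner_t (v : ℝ) (hv : 0 < v) : ∫⁻ t in Ioi 0, H v t
      = ENNReal.ofReal (Gamma (a + b - κ) * c ^ (-(a + b - κ)))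
        * ENNReal.ofReal (v ^ (κ - a - 1) * (1 + v) ^ (-(κ - a + (κ - b)))) := by
    have h1v : 0 < 1 + v := by linarith
    simp_rw [H, ENNReal.ofReal_mul (by positivity : 0 ≤ v ^ (b - 1) * (1 + v) ^ (-κ))]
    rw [lintegral_const_mul' _ _ ENNReal.ofReal_ne_top,
      lintegral_rpow_mul_exp_neg_mul_Ioi hp (by positivity), ← ENNReal.ofReal_mul (by positivity),
      ← ENNReal.ofReal_mul (by positivity)]
    congr 1
    rw [mul_rpow (by positivity) hc.le, div_rpow hv.le h1v.le,
      show κ - a - 1 = (b - 1) + -(a + b - κ) by ring,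
      show -(κ - a + (κ - b)) = -κ - -(a + b - κ) by ring, rpow_add hv, rpow_sub h1v]
    ring
  calc _ = ∫⁻ t in Ioi 0, ∫⁻ v in Ioi 0, H v t := setLIntegral_congr_fun measurableSet_Ioi inner_u
    _ = ∫⁻ v in Ioi 0, ∫⁻ t in Ioi 0, H v t :=
        lintegral_lintegral_swap (Measurable.aemeasurable (by fun_prop))
    _ = ENNReal.ofReal (Gamma (a + b - κ) * c ^ (-(a + b - κ))) * ∫⁻ v in Ioi 0,
          ENNReal.ofReal (v ^ (κ - a - 1) * (1 + v) ^ (-(κ - a + (κ - b)))) := by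
        rw [setLIntegral_congr_fun measurableSet_Ioi inner_t,
          lintegral_const_mul' _ _ ENNReal.ofReal_ne_top]
    _ = _ := by
        rw [lintegral_rpow_mul_one_add_rpow_neg_Ioi (by linarith) (by linarith),
          ← ENNReal.ofReal_mul (by positivity), show κ - a + (κ - b) = 2 * κ - a - b by ring]

lemma lintegral_lintegral_lintegral_swap {α β γ : Type*} [MeasurableSpace α] [MeasurableSpace β]
    [MeasurableSpace γ] {μ : Measure α} {ν : Measure β} {ρ : Measure γ} [SFinite μ] [SFinite ν]
    [SFinite ρ] {f : α → β → γ → ℝ≥0∞} (hf : Measurable fun p : α × β × γ => f p.1 p.2.1 p.2.2) :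
    ∫⁻ x, ∫⁻ y, ∫⁻ z, f x y z ∂ρ ∂ν ∂μ = ∫⁻ y, ∫⁻ z, ∫⁻ x, f x y z ∂μ ∂ρ ∂ν := by
  have hf' : Measurable (uncurry fun x y => ∫⁻ z, f x y z ∂ρ) :=
    Measurable.lintegral_prod_right (hf.comp MeasurableEquiv.prodAssoc.measurable)
  rw [lintegral_lintegral_swap hf'.aemeasurable]
  exact lintegral_congr fun y => lintegral_lintegral_swap (by fun_prop)

section InnerProductSpace

variable {V : Type*} [NormedAddCommGroup V] [InnerProductSpace ℝ V]

lemma norm_sub_sq_mul_add_norm_sq_mul {t u : ℝ} (htu : t + u ≠ 0) (x y : V) :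
    ‖x - y‖ ^ 2 * t + ‖y‖ ^ 2 * u
      = (t + u) * ‖y - (t / (t + u)) • x‖ ^ 2 + t * u / (t + u) * ‖x‖ ^ 2 := by
  rw [norm_sub_sq_real, norm_sub_sq_real, real_inner_smul_right, norm_smul, mul_pow,
    Real.norm_eq_abs, sq_abs, real_inner_comm]
  field_simp
  ring

variable [FiniteDimensional ℝ V] [MeasurableSpace V] [BorelSpace V]

lemma lintegral_exp_neg_mul_norm_sub_sq {b : ℝ} (hb : 0 < b) (m : V) :
    ∫⁻ y, ENNReal.ofReal (exp (-(b * ‖y - m‖ ^ 2)))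
      = ENNReal.ofReal ((π / b) ^ (Module.finrank ℝ V / 2 : ℝ)) := by
  have h := GaussianFourier.integral_rexp_neg_mul_sq_norm (V := V) hb
  simp only [neg_mul] at h
  rw [← integral_sub_right_eq_self _ m] at h
  rw [← h, ofReal_integral_eq_lintegral_ofReal (.of_integral_ne_zero (by rw [h]; positivity))
    (ae_of_all _ fun y => (exp_pos _).le)]

lemma lintegral_exp_neg_norm_sub_sq_mul_add_norm_sq_mul {t u : ℝ} (ht : 0 < t) (hu : 0 < u)
    (x : V) :
    ∫⁻ y, ENNReal.ofReal (exp (-(‖x - y‖ ^ 2 * t + ‖y‖ ^ 2 * u)))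
      = ENNReal.ofReal ((π / (t + u)) ^ (Module.finrank ℝ V / 2 : ℝ)
          * exp (-(t * u / (t + u) * ‖x‖ ^ 2))) := by
  have htu : 0 < t + u := by linarith
  simp_rw [norm_sub_sq_mul_add_norm_sq_mul htu.ne', neg_add, exp_add,
    ENNReal.ofReal_mul (exp_pos _).le]
  rw [lintegral_mul_const' _ _ ENNReal.ofReal_ne_top, lintegral_exp_neg_mul_norm_sub_sq htu,
    ← ENNReal.ofReal_mul (by positivity)]

theorem lintegral_norm_sub_rpow_mul_norm_rpow {a b : ℝ} (ha : 0 < a) (hb : 0 < b)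
    (han : a < Module.finrank ℝ V / 2) (hbn : b < Module.finrank ℝ V / 2)
    (habn : Module.finrank ℝ V / 2 < a + b) {x : V} (hx : x ≠ 0) :
    ∫⁻ y, ENNReal.ofReal (‖x - y‖ ^ (-(2 * a)) * ‖y‖ ^ (-(2 * b)))
      = ENNReal.ofReal (π ^ (Module.finrank ℝ V / 2 : ℝ) * Gamma (Module.finrank ℝ V / 2 - a)
          * Gamma (Module.finrank ℝ V / 2 - b) * Gamma (a + b - Module.finrank ℝ V / 2)
          / (Gamma a * Gamma b * Gamma (Module.finrank ℝ V - a - b))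
          * ‖x‖ ^ (Module.finrank ℝ V - 2 * a - 2 * b)) := by
  set κ : ℝ := Module.finrank ℝ V / 2 with hκ
  have : Nontrivial V := Module.nontrivial_of_finrank_pos (R := ℝ)
    (by exact_mod_cast (by linarith : (0 : ℝ) < Module.finrank ℝ V))
  have hΓ : 0 < Gamma a * Gamma b := mul_pos (Gamma_pos_of_pos ha) (Gamma_pos_of_pos hb)
  set Φ : V → ℝ → ℝ → ℝ≥0∞ := fun y t u => ENNReal.ofReal (t ^ (a - 1) * u ^ (b - 1))
    * ENNReal.ofReal (exp (-(‖x - y‖ ^ 2 * t + ‖y‖ ^ 2 * u)))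
  have subordination : ∀ᵐ y, ENNReal.ofReal (Gamma a * Gamma b)
      * ENNReal.ofReal (‖x - y‖ ^ (-(2 * a)) * ‖y‖ ^ (-(2 * b)))
        = ∫⁻ t in Ioi 0, ∫⁻ u in Ioi 0, Φ y t u := by
    filter_upwards [Measure.ae_ne volume 0, Measure.ae_ne volume x] with y hy0 hyx
    rw [lintegral_Ioi_Ioi_rpow_mul_exp_neg_sq_mul ha hb
      (norm_pos_iff.2 (sub_ne_zero.2 hyx.symm)) (norm_pos_iff.2 hy0), ENNReal.ofReal_mul hΓ.le]
  have gaussian (t : ℝ) (ht : 0 < t) (u : ℝ) (hu : 0 < u) : ∫⁻ y, Φ y t u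
      = ENNReal.ofReal (π ^ κ) * ENNReal.ofReal (t ^ (a - 1) * u ^ (b - 1) * (t + u) ^ (-κ)
          * exp (-(t * u / (t + u) * ‖x‖ ^ 2))) := by
    rw [lintegral_const_mul' _ _ ENNReal.ofReal_ne_top,
      lintegral_exp_neg_norm_sub_sq_mul_add_norm_sq_mul ht hu, ← hκ,
      ← ENNReal.ofReal_mul (by positivity), ← ENNReal.ofReal_mul (by positivity),
      div_rpow pi_pos.le (by positivity), rpow_neg (by positivity)]
    ring_nf
  have key : ENNReal.ofReal (Gamma a * Gamma b)
      * ∫⁻ y, ENNReal.ofReal (‖x - y‖ ^ (-(2 * a)) * ‖y‖ ^ (-(2 * b)))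
        = ENNReal.ofReal (π ^ κ) * ENNReal.ofReal (Gamma (a + b - κ) * (‖x‖ ^ 2) ^ (-(a + b - κ))
          * (Gamma (κ - a) * Gamma (κ - b) / Gamma (2 * κ - a - b))) := by
    rw [← lintegral_const_mul' _ _ ENNReal.ofReal_ne_top, lintegral_congr_ae subordination,
      lintegral_lintegral_lintegral_swap (by fun_prop),
      setLIntegral_congr_fun measurableSet_Ioi fun t ht =>
        setLIntegral_congr_fun measurableSet_Ioi (gaussian t ht)]
    simp_rw [lintegral_const_mul' _ _ ENNReal.ofReal_ne_top]
    rw [lintegral_Ioi_Ioi_eq_Gamma_mul_beta (by positivity) han hbn habn]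
  rw [← ENNReal.mul_right_inj (by simpa using hΓ) ENNReal.ofReal_ne_top, key,
    ← ENNReal.ofReal_mul (by positivity), ← ENNReal.ofReal_mul hΓ.le, ← rpow_two,
    ← rpow_mul (norm_nonneg x), show 2 * κ = Module.finrank ℝ V by rw [hκ]; ring,
    show 2 * -(a + b - κ) = Module.finrank ℝ V - 2 * a - 2 * b by rw [hκ]; ring]
  field_simp

end InnerProductSpace

lemma integrable_and_integral_eq_of_lintegral_ofReal_eq {X : Type*} [MeasurableSpace X]
    {μ : Measure X} {f : X → ℝ} (hf : AEStronglyMeasurable f μ) (hf0 : 0 ≤ᵐ[μ] f) {c : ℝ}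
    (hc : 0 ≤ c) (h : ∫⁻ y, ENNReal.ofReal (f y) ∂μ = ENNReal.ofReal c) :
    Integrable f μ ∧ ∫ y, f y ∂μ = c :=
  ⟨⟨hf, (hasFiniteIntegral_iff_ofReal hf0).2 (h ▸ ENNReal.ofReal_lt_top)⟩,
    by rw [integral_eq_lintegral_of_nonneg_ae hf0 hf, h, ENNReal.toReal_ofReal hc]⟩

lemma sConst_mul_eq_one {α : ℝ} {d : ℕ} (hα : 0 < α) (h2α : 2 * α < d) :
    sConst α d * ((d - 2 * α) / (d - α))
        * (Gamma ((d - α) / 2) / (π ^ ((d : ℝ) / 2) * 2 ^ α * Gamma (α / 2)))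
        * (π ^ ((d : ℝ) / 2) * Gamma (α / 2) * Gamma (d / 2 - α) * Gamma (α / 2)
          / (Gamma ((d - α) / 2) * Gamma α * Gamma ((d - α) / 2))) = 1 := by
  have h1 : (d : ℝ) - α ≠ 0 := by linarith
  have hΓ1 : Gamma ((d - α) / 2) ≠ 0 := (Gamma_pos_of_pos (by linarith)).ne'
  have hΓ2 : Gamma (d / 2 - α) ≠ 0 := (Gamma_pos_of_pos (by linarith)).ne'
  rw [sConst, Gamma_add_one (by linarith), Gamma_add_one (by linarith)]
  -- otherwise `field_simp` rewrites the argument `d / 2 - α` and no longer sees `hΓ2`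
  generalize Gamma (d / 2 - α) = G at hΓ2 ⊢
  field_simp
  exact div_self (by intro h; linarith)

theorem singular_stationary_solution_general (d : ℕ) (α : ℝ) (hα : α ∈ Set.Ioo (0:ℝ) 2)
    (h2α : 2 * α < d) (x : EuclideanSpace ℝ (Fin d)) (hx : x ≠ 0) :
    Integrable (fun y : EuclideanSpace ℝ (Fin d) => ‖x - y‖ ^ (α - d) * ‖y‖ ^ (-(2 * α))) ∧
    sConst α d * ((d - 2 * α) / (d - α)) *
        (Gamma ((d - α) / 2) / (π ^ ((d : ℝ) / 2) * 2 ^ α * Gamma (α / 2))) *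
        (∫ y : EuclideanSpace ℝ (Fin d), ‖x - y‖ ^ (α - d) * ‖y‖ ^ (-(2 * α)))
      = ‖x‖ ^ (-α) := by
  obtain ⟨hα0, -⟩ := hα
  have hdα : 0 < (d : ℝ) / 2 - α := by linarith
  have hdα' : 0 < ((d : ℝ) - α) / 2 := by linarith
  have hlint := lintegral_norm_sub_rpow_mul_norm_rpow (V := EuclideanSpace ℝ (Fin d))
    (a := (d - α) / 2) (b := α) (by linarith) hα0 (by rw [finrank_euclideanSpace_fin]; linarith)
    (by rw [finrank_euclideanSpace_fin]; linarith) (by rw [finrank_euclideanSpace_fin]; linarith) hx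
  rw [finrank_euclideanSpace_fin, show -(2 * (((d : ℝ) - α) / 2)) = α - d by ring,
    show (d : ℝ) / 2 - (d - α) / 2 = α / 2 by ring,
    show ((d : ℝ) - α) / 2 + α - d / 2 = α / 2 by ring,
    show (d : ℝ) - (d - α) / 2 - α = (d - α) / 2 by ring,
    show (d : ℝ) - 2 * ((d - α) / 2) - 2 * α = -α by ring] at hlint
  obtain ⟨hint, hval⟩ := integrable_and_integral_eq_of_lintegral_ofReal_eq (by fun_prop)
    (ae_of_all _ fun y => by positivity) (by positivity) hlint
  exact ⟨hint, by rw [hval, ← mul_assoc, sConst_mul_eq_one hα0 h2α, one_mul]⟩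

/-- `u_C(x) = s(α,d)|x|^{-α}` is a stationary solution: applying the Riesz potential
`ℐ_α` (the inverse of `(−Δ)^{α/2}`) yields the stated convolution identity. -/
theorem singular_stationary_solution (d : ℕ) (hd : 2 ≤ d) (α : ℝ) (hα : α ∈ Set.Ioo (0:ℝ) 2)
    (h2α : 2 * α < d) (x : EuclideanSpace ℝ (Fin d)) (hx : x ≠ 0) :
    Integrable (fun y : EuclideanSpace ℝ (Fin d) => ‖x - y‖ ^ (α - d) * ‖y‖ ^ (-(2 * α))) ∧
    sConst α d * ((d - 2 * α) / (d - α)) *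
        (Gamma ((d - α) / 2) / (π ^ ((d : ℝ) / 2) * 2 ^ α * Gamma (α / 2))) *
        (∫ y : EuclideanSpace ℝ (Fin d), ‖x - y‖ ^ (α - d) * ‖y‖ ^ (-(2 * α)))
      = ‖x‖ ^ (-α) :=
  singular_stationary_solution_general d α hα h2α x hx
end

section
/- For each integer d ≥ 2 and each α ∈ (0,1], the inequality B(α/2, d/2 − α + 1) · B(α/2, α/2) ≥ B(α/2, 1 − α/2) · B(α/2, d/2) holds. -/
/-! For fixed `μ > 0`, Hölder's inequality applied to the integral
`B(μ, ν) = ∫₀¹ x^(μ-1) (1-x)^(ν-1) dx` makes `ν ↦ log B(μ, ν)` convex on `(0, ∞)`. A convex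
function `g` satisfies `g u + g v ≤ g x₁ + g x₂` whenever `x₁ ≤ u, v` and `u + v = x₁ + x₂`;
the claimed inequality is the case `x₁ = α/2`, `x₂ = d/2 - α + 1`, `u = 1 - α/2`, `v = d/2`. -/

open Real

/-- The Euler Beta function `B(μ,ν) = Γ(μ)Γ(ν)/Γ(μ+ν)`. -/
noncomputable def eulerBeta (μ ν : ℝ) : ℝ := Gamma μ * Gamma ν / Gamma (μ + ν)

open MeasureTheory Set

theorem MeasureTheory.integral_rpow_mul_rpow_le {α : Type*} [MeasurableSpace α] {μ : Measure α}
    {f g : α → ℝ} (hf_nonneg : 0 ≤ᵐ[μ] f) (hg_nonneg : 0 ≤ᵐ[μ] g) (hf : Integrable f μ)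
    (hg : Integrable g μ) {p q : ℝ} (hp : 0 ≤ p) (hq : 0 ≤ q) (hpq : p + q = 1) :
    ∫ x, f x ^ p * g x ^ q ∂μ ≤ (∫ x, f x ∂μ) ^ p * (∫ x, g x ∂μ) ^ q := by
  have hfg_nonneg : 0 ≤ᵐ[μ] fun x ↦ f x ^ p * g x ^ q := by
    filter_upwards [hf_nonneg, hg_nonneg] with x hfx hgx
    exact mul_nonneg (rpow_nonneg hfx p) (rpow_nonneg hgx q)
  have hfg_meas : AEStronglyMeasurable (fun x ↦ f x ^ p * g x ^ q) μ :=
    ((hf.1.aemeasurable.pow_const p).mul (hg.1.aemeasurable.pow_const q)).aestronglyMeasurable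
  rw [integral_eq_lintegral_of_nonneg_ae hfg_nonneg hfg_meas,
    integral_eq_lintegral_of_nonneg_ae hf_nonneg hf.1,
    integral_eq_lintegral_of_nonneg_ae hg_nonneg hg.1, ENNReal.toReal_rpow, ENNReal.toReal_rpow,
    ← ENNReal.toReal_mul]
  refine ENNReal.toReal_mono ?_ ?_
  · exact ENNReal.mul_ne_top (ENNReal.rpow_ne_top_of_nonneg hp hf.lintegral_lt_top.ne)
      (ENNReal.rpow_ne_top_of_nonneg hq hg.lintegral_lt_top.ne)
  calc ∫⁻ x, ENNReal.ofReal (f x ^ p * g x ^ q) ∂μ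
      = ∫⁻ x, ENNReal.ofReal (f x) ^ p * ENNReal.ofReal (g x) ^ q ∂μ := by
        refine lintegral_congr_ae ?_
        filter_upwards [hf_nonneg, hg_nonneg] with x hfx hgx
        rw [ENNReal.ofReal_mul (rpow_nonneg hfx p), ENNReal.ofReal_rpow_of_nonneg hfx hp,
          ENNReal.ofReal_rpow_of_nonneg hgx hq]
    _ ≤ _ := ENNReal.lintegral_mul_norm_pow_le hf.1.aemeasurable.ennreal_ofReal
        hg.1.aemeasurable.ennreal_ofReal hp hq hpq

theorem ConvexOn.map_add_map_le {s : Set ℝ} {g : ℝ → ℝ} (hg : ConvexOn ℝ s g) {x₁ x₂ u v : ℝ}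
    (hx₁ : x₁ ∈ s) (hx₂ : x₂ ∈ s) (hu : x₁ ≤ u) (hv : x₁ ≤ v) (huv : u + v = x₁ + x₂) :
    g u + g v ≤ g x₁ + g x₂ := by
  rcases hu.eq_or_lt with rfl | hu
  · obtain rfl : v = x₂ := by linarith
    exact le_rfl
  have hx : 0 < x₂ - x₁ := by linarith
  set a := (x₂ - u) / (x₂ - x₁)
  set b := (u - x₁) / (x₂ - x₁)
  have ha : 0 ≤ a := div_nonneg (by linarith) hx.le
  have hb : 0 ≤ b := div_nonneg (by linarith) hx.le
  have hab : a + b = 1 := by simp only [a, b]; field_simp; ring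
  have hu_comb : u = a • x₁ + b • x₂ := by simp only [a, b, smul_eq_mul]; field_simp; ring
  have hv_comb : v = b • x₁ + a • x₂ := by
    obtain rfl : v = x₁ + x₂ - u := by linarith
    simp only [a, b, smul_eq_mul]; field_simp; ring
  have hgu := hg.2 hx₁ hx₂ ha hb hab
  have hgv := hg.2 hx₁ hx₂ hb ha (by rw [add_comm, hab])
  rw [← hu_comb] at hgu
  rw [← hv_comb] at hgv
  simp only [smul_eq_mul] at hgu hgv
  calc g u + g v ≤ (a + b) * g x₁ + (a + b) * g x₂ := by linarith
    _ = g x₁ + g x₂ := by rw [hab, one_mul, one_mul]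

lemma eulerBeta_pos {μ ν : ℝ} (hμ : 0 < μ) (hν : 0 < ν) : 0 < eulerBeta μ ν :=
  div_pos (mul_pos (Gamma_pos_of_pos hμ) (Gamma_pos_of_pos hν)) (Gamma_pos_of_pos (add_pos hμ hν))

lemma ofReal_betaIntegrand {μ ν x : ℝ} (hx₀ : 0 ≤ x) (hx₁ : x ≤ 1) :
    ((x ^ (μ - 1) * (1 - x) ^ (ν - 1) : ℝ) : ℂ) =
      (x : ℂ) ^ ((μ : ℂ) - 1) * (1 - (x : ℂ)) ^ ((ν : ℂ) - 1) := by
  rw [Complex.ofReal_mul, Complex.ofReal_cpow hx₀, Complex.ofReal_cpow (sub_nonneg.2 hx₁)]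
  push_cast
  rfl

lemma eulerBeta_eq_integral {μ ν : ℝ} (hμ : 0 < μ) (hν : 0 < ν) :
    eulerBeta μ ν = ∫ x in Ioo (0 : ℝ) 1, x ^ (μ - 1) * (1 - x) ^ (ν - 1) := by
  have h := Complex.Gamma_mul_Gamma_eq_betaIntegral (s := μ) (t := ν)
    (by simpa using hμ) (by simpa using hν)
  have hcongr : EqOn (fun x : ℝ ↦ ((x ^ (μ - 1) * (1 - x) ^ (ν - 1) : ℝ) : ℂ))
      (fun x : ℝ ↦ (x : ℂ) ^ ((μ : ℂ) - 1) * (1 - (x : ℂ)) ^ ((ν : ℂ) - 1)) (uIcc 0 1) := by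
    intro x hx
    rw [uIcc_of_le zero_le_one] at hx
    exact ofReal_betaIntegrand hx.1 hx.2
  rw [Complex.betaIntegral, ← intervalIntegral.integral_congr hcongr,
    intervalIntegral.integral_ofReal, intervalIntegral.integral_of_le zero_le_one,
    integral_Ioc_eq_integral_Ioo] at h
  simp only [Complex.Gamma_ofReal, ← Complex.ofReal_add, ← Complex.ofReal_mul,
    Complex.ofReal_inj] at h
  rw [eulerBeta, h, mul_div_cancel_left₀ _ (Gamma_pos_of_pos (add_pos hμ hν)).ne']

lemma integrableOn_betaIntegrand {μ ν : ℝ} (hμ : 0 < μ) (hν : 0 < ν) :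
    IntegrableOn (fun x ↦ x ^ (μ - 1) * (1 - x) ^ (ν - 1)) (Ioo (0 : ℝ) 1) := by
  have h := Complex.betaIntegral_convergent (u := μ) (v := ν)
    (by simpa using hμ) (by simpa using hν)
  rw [intervalIntegrable_iff_integrableOn_Ioo_of_le zero_le_one] at h
  have h' := (h.congr_fun (fun x hx ↦ (ofReal_betaIntegrand hx.1.le hx.2.le).symm)
    measurableSet_Ioo).re
  simpa [IntegrableOn] using h'

lemma eulerBeta_add_le_rpow_mul_rpow {μ s t a b : ℝ} (hμ : 0 < μ) (hs : 0 < s) (ht : 0 < t)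
    (ha : 0 ≤ a) (hb : 0 ≤ b) (hab : a + b = 1) :
    eulerBeta μ (a * s + b * t) ≤ eulerBeta μ s ^ a * eulerBeta μ t ^ b := by
  have hst : 0 < a * s + b * t := convex_Ioi (0 : ℝ) hs ht ha hb hab
  have hnonneg (ν : ℝ) : 0 ≤ᵐ[volume.restrict (Ioo (0 : ℝ) 1)]
      fun x ↦ x ^ (μ - 1) * (1 - x) ^ (ν - 1) :=
    (ae_restrict_iff' measurableSet_Ioo).2 <| ae_of_all _ fun x hx ↦
      mul_nonneg (rpow_nonneg hx.1.le _) (rpow_nonneg (sub_nonneg.2 hx.2.le) _)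
  rw [eulerBeta_eq_integral hμ hs, eulerBeta_eq_integral hμ ht, eulerBeta_eq_integral hμ hst]
  refine le_of_eq_of_le (setIntegral_congr_fun measurableSet_Ioo fun x hx ↦ ?_)
    (integral_rpow_mul_rpow_le (hnonneg s) (hnonneg t) (integrableOn_betaIntegrand hμ hs)
      (integrableOn_betaIntegrand hμ ht) ha hb hab)
  have hx₀ : 0 < x := hx.1
  have hx₁ : 0 < 1 - x := sub_pos.2 hx.2
  rw [mul_rpow (rpow_nonneg hx₀.le _) (rpow_nonneg hx₁.le _),
    mul_rpow (rpow_nonneg hx₀.le _) (rpow_nonneg hx₁.le _), ← rpow_mul hx₀.le, ← rpow_mul hx₀.le,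
    ← rpow_mul hx₁.le, ← rpow_mul hx₁.le, mul_mul_mul_comm, ← rpow_add hx₀, ← rpow_add hx₁]
  congr 2
  · linear_combination (1 - μ) * hab
  · linear_combination hab

lemma convexOn_log_eulerBeta {μ : ℝ} (hμ : 0 < μ) :
    ConvexOn ℝ (Ioi 0) fun ν ↦ log (eulerBeta μ ν) := by
  refine ⟨convex_Ioi 0, fun s hs t ht a b ha hb hab ↦ ?_⟩
  have hBs := eulerBeta_pos hμ hs
  have hBt := eulerBeta_pos hμ ht
  simp only [smul_eq_mul]
  rw [← log_rpow hBs, ← log_rpow hBt, ← log_mul (rpow_pos_of_pos hBs a).ne'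
    (rpow_pos_of_pos hBt b).ne']
  have hst : a * s + b * t ∈ Ioi 0 := convex_Ioi 0 hs ht ha hb hab
  exact log_le_log (eulerBeta_pos hμ hst) (eulerBeta_add_le_rpow_mul_rpow hμ hs ht ha hb hab)

lemma eulerBeta_mul_eulerBeta_le {μ x₁ x₂ u v : ℝ} (hμ : 0 < μ) (hx₁ : 0 < x₁) (hu : x₁ ≤ u)
    (hv : x₁ ≤ v) (huv : u + v = x₁ + x₂) :
    eulerBeta μ u * eulerBeta μ v ≤ eulerBeta μ x₁ * eulerBeta μ x₂ := by
  have hx₂ : 0 < x₂ := by linarith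
  have hB {ν : ℝ} (hν : x₁ ≤ ν) : 0 < eulerBeta μ ν := eulerBeta_pos hμ (hx₁.trans_le hν)
  have h := (convexOn_log_eulerBeta hμ).map_add_map_le hx₁ hx₂ hu hv huv
  rw [← log_mul (hB hu).ne' (hB hv).ne', ← log_mul (hB le_rfl).ne' (eulerBeta_pos hμ hx₂).ne'] at h
  exact (log_le_log_iff (mul_pos (hB hu) (hB hv))
    (mul_pos (hB le_rfl) (eulerBeta_pos hμ hx₂))).1 h

/-- For `d ≥ 2` and `α ∈ (0,1]`,
`B(α/2, d/2 − α + 1) B(α/2, α/2) ≥ B(α/2, 1 − α/2) B(α/2, d/2)`. -/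
theorem beta_inequality (d : ℕ) (hd : 2 ≤ d) (α : ℝ) (hα : α ∈ Set.Ioc (0:ℝ) 1) :
    eulerBeta (α / 2) ((d : ℝ) / 2 - α + 1) * eulerBeta (α / 2) (α / 2) ≥
      eulerBeta (α / 2) (1 - α / 2) * eulerBeta (α / 2) ((d : ℝ) / 2) := by
  obtain ⟨hα₀, hα₁⟩ := hα
  have hd' : (2 : ℝ) ≤ d := by exact_mod_cast hd
  rw [ge_iff_le, mul_comm (eulerBeta _ _) (eulerBeta _ (α / 2))]
  exact eulerBeta_mul_eulerBeta_le (by positivity) (by positivity) (by linarith) (by linarith)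
    (by ring)
end

section
/- For each integer d ≥ 2 there exists a constant c(d) ∈ (0,1), depending only on d, such that for every κ ∈ [1,d) and every nonnegative, radially symmetric, locally integrable function v on ℝ^d one has c(d) · sup_{x₀ ∈ ℝ^d, ρ > 0} ρ^{κ−d} ∫_{{|x−x₀|<ρ}} v(x) dx ≤ sup_{R>0} R^{κ−d} ∫_{{|x|<R}} v(x) dx ≤ sup_{x₀ ∈ ℝ^d, ρ > 0} ρ^{κ−d} ∫_{{|x−x₀|<ρ}} v(x) dx. (In other words, for radial nonnegative functions the homogeneous Morrey norm in M^{d/κ}(ℝ^d) is equivalent to the supremum over balls centered at the origin.) -/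
/-!
Balls centred at the origin are among all balls, which gives the second inequality. For the first,
fix a ball `B(x₀, ρ)` and let `r = ‖x₀‖`. If `r ≤ 2ρ` the ball lies in `B(0, 3ρ)`. Otherwise take a
maximal `2ρ`-separated set of `N` points on the sphere of radius `r`. By radial symmetry every ball
`B(a, ρ)` around one of them has the same mass as `B(x₀, ρ)`; these balls are disjoint and lie in
`B(0, 2r)`, so `N ∫_{B(x₀,ρ)} v ≤ ∫_{B(0,2r)} v`. By maximality the balls `B(a, 3ρ)` together with
`closedBall 0 (r - ρ)` cover `B(0, r + ρ)`, and comparing volumes gives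
`N (3ρ)^d ≥ (r + ρ)^d - (r - ρ)^d ≥ 2ρ r^(d-1)`. With `κ ≥ 1` the two bounds combine to the
constant `6^d`.
-/

open MeasureTheory Metric Module
open scoped NNReal

theorem IsCompact.exists_finite_isSeparated_isCover {X : Type*} [PseudoEMetricSpace X]
    {A : Set X} (hA : IsCompact A) {ε : ℝ≥0} (hε : ε ≠ 0) :
    ∃ C ⊆ A, C.Finite ∧ IsSeparated ε C ∧ IsCover ε A C := by
  -- a finite `ε / 2`-cover bounds the cardinality of every `ε`-separated subset
  obtain ⟨N, -, hN, hNA⟩ := exists_finite_isCover_of_isCompact (ε := ε / 2) (by simpa) hA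
  have hpack : packingNumber ε A ≠ ⊤ := by
    have h := packingNumber_two_mul_le_externalCoveringNumber (ε / 2) A
    rw [mul_div_cancel₀ ε two_ne_zero] at h
    exact ne_top_of_le_ne_top hN.encard_lt_top.ne (h.trans hNA.externalCoveringNumber_le_encard)
  refine ⟨maximalSeparatedSet ε A, maximalSeparatedSet_subset, ?_, isSeparated_maximalSeparatedSet,
    isCover_maximalSeparatedSet hpack⟩
  rw [← Set.encard_ne_top_iff, encard_maximalSeparatedSet hpack]
  exact hpack

theorem ball_zero_subset_closedBall_union_iUnion_ball {E : Type*} [NormedAddCommGroup E]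
    [NormedSpace ℝ E] {r ρ δ : ℝ} {C : Set E} (hρr : ρ ≤ r)
    (hC : sphere 0 r ⊆ ⋃ a ∈ C, closedBall a δ) :
    ball 0 (r + ρ) ⊆ closedBall 0 (r - ρ) ∪ ⋃ a ∈ C, ball a (δ + ρ) := by
  intro x hx
  rw [mem_ball_zero_iff] at hx
  rcases le_or_gt ‖x‖ (r - ρ) with hin | hout
  · exact Or.inl (mem_closedBall_zero_iff.2 hin)
  have hx0 : 0 < ‖x‖ := by linarith
  have hr : 0 < r := by linarith
  set p : E := (r / ‖x‖) • x
  have hp : p ∈ sphere (0 : E) r := by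
    rw [mem_sphere_zero_iff_norm, norm_smul, Real.norm_of_nonneg (by positivity),
      div_mul_cancel₀ _ hx0.ne']
  have hxp : dist x p < ρ := by
    have hsub : x - p = ((‖x‖ - r) / ‖x‖) • x := by
      rw [sub_div, div_self hx0.ne', sub_smul, one_smul]
    rw [dist_eq_norm, hsub, norm_smul, Real.norm_eq_abs, abs_div, abs_norm,
      div_mul_cancel₀ _ hx0.ne', abs_lt]
    constructor <;> linarith
  obtain ⟨a, ha, hpa⟩ := Set.mem_iUnion₂.1 (hC hp)
  refine Or.inr (Set.mem_iUnion₂.2 ⟨a, ha, ?_⟩)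
  calc dist x a ≤ dist x p + dist p a := dist_triangle x p a
    _ < δ + ρ := by rw [mem_closedBall] at hpa; linarith

theorem pow_finrank_le_of_ball_subset_closedBall_union {E : Type*} [NormedAddCommGroup E]
    [NormedSpace ℝ E] [FiniteDimensional ℝ E] {x y : E} {R R' s : ℝ} {t : Finset E}
    (hR : 0 < R) (hR' : 0 ≤ R') (hs : 0 ≤ s)
    (h : ball x R ⊆ closedBall y R' ∪ ⋃ a ∈ t, ball a s) :
    R ^ finrank ℝ E ≤ R' ^ finrank ℝ E + t.card * s ^ finrank ℝ E := by
  borelize E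
  set μ : Measure E := Measure.addHaar
  have hμ0 : μ (ball 0 1) ≠ 0 := (measure_ball_pos μ 0 one_pos).ne'
  have hμtop : μ (ball 0 1) ≠ ⊤ := measure_ball_lt_top.ne
  have hvol : μ (ball x R) ≤ μ (closedBall y R') + ∑ a ∈ t, μ (closedBall a s) :=
    calc μ (ball x R) ≤ μ (closedBall y R') + μ (⋃ a ∈ t, ball a s) :=
          (measure_mono h).trans (measure_union_le _ _)
      _ ≤ μ (closedBall y R') + ∑ a ∈ t, μ (closedBall a s) := by
          gcongr
          exact (measure_biUnion_finset_le t _).trans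
            (Finset.sum_le_sum fun a _ => measure_mono ball_subset_closedBall)
  simp only [Measure.addHaar_ball_of_pos μ x hR, Measure.addHaar_closedBall μ _ hR',
    Measure.addHaar_closedBall μ _ hs, Finset.sum_const, nsmul_eq_mul, ← mul_assoc,
    ← add_mul] at hvol
  rw [ENNReal.mul_le_mul_iff_left hμ0 hμtop, ← ENNReal.ofReal_natCast,
    ← ENNReal.ofReal_mul (by positivity), ← ENNReal.ofReal_add (by positivity) (by positivity),
    ENNReal.ofReal_le_ofReal_iff (by positivity)] at hvol
  exact hvol

theorem card_mul_le_setIntegral_of_pairwiseDisjoint {α ι : Type*} [MeasurableSpace α]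
    {μ : Measure α} {v : α → ℝ} {s : Set α} {B : ι → Set α} {t : Finset ι} {I : ℝ}
    (hB : ∀ i ∈ t, MeasurableSet (B i)) (hdisj : (t : Set ι).PairwiseDisjoint B)
    (hBs : ∀ i ∈ t, B i ⊆ s) (hI : ∀ i ∈ t, ∫ x in B i, v x ∂μ = I)
    (hv : 0 ≤ᵐ[μ.restrict s] v) (hvs : IntegrableOn v s μ) :
    t.card * I ≤ ∫ x in s, v x ∂μ := by
  have hunion : ∫ x in ⋃ i ∈ t, B i, v x ∂μ = t.card * I := by
    rw [integral_biUnion_finset t hB hdisj fun i hi => hvs.mono_set (hBs i hi),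
      Finset.sum_congr rfl hI, Finset.sum_const, nsmul_eq_mul]
  rw [← hunion]
  exact setIntegral_mono_set hvs hv (Set.iUnion₂_subset hBs).eventuallyLE

theorem two_mul_mul_pow_le_add_pow_sub_sub_pow {r ρ : ℝ} (hρ : 0 ≤ ρ) (hρr : ρ ≤ r) (n : ℕ) :
    2 * ρ * r ^ n ≤ (r + ρ) ^ (n + 1) - (r - ρ) ^ (n + 1) := by
  have h₁ : (r - ρ) ^ n ≤ (r + ρ) ^ n := pow_le_pow_left₀ (by linarith) (by linarith) n
  have h₂ : r ^ n ≤ (r + ρ) ^ n := pow_le_pow_left₀ (by linarith) (by linarith) n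
  rw [pow_succ, pow_succ]
  nlinarith

theorem rpow_mul_le_rpow_mul {ρ r κ : ℝ} (hρ : 0 < ρ) (hρr : ρ ≤ r) (hκ : 1 ≤ κ) :
    ρ ^ κ * r ≤ r ^ κ * ρ := by
  have hr : 0 < r := hρ.trans_le hρr
  have h : ρ ^ (κ - 1) ≤ r ^ (κ - 1) := Real.rpow_le_rpow hρ.le hρr (by linarith)
  rw [Real.rpow_sub_one hρ.ne', Real.rpow_sub_one hr.ne', div_le_div_iff₀ hρ hr] at h
  exact h

theorem rpow_sub_mul_pow_le {n : ℕ} {ρ r κ : ℝ} (hρ : 0 < ρ) (hρr : ρ ≤ r) (hκ : 1 ≤ κ) :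
    ρ ^ (κ - (n + 1 : ℕ)) * (3 * ρ) ^ (n + 1) ≤
      6 ^ (n + 1) * (2 * r) ^ (κ - (n + 1 : ℕ)) * (2 * ρ * r ^ n) := by
  have hr : 0 < r := hρ.trans_le hρr
  have h2 : (1 : ℝ) ≤ 2 ^ κ := Real.one_le_rpow (by norm_num) (by linarith)
  have key := rpow_mul_le_rpow_mul hρ hρr hκ
  rw [Real.rpow_sub_natCast hρ.ne', Real.rpow_sub_natCast (by positivity),
    Real.mul_rpow (by norm_num) hr.le, mul_pow, mul_pow, pow_succ r n,
    show (6:ℝ) ^ (n + 1) = 3 ^ (n + 1) * 2 ^ (n + 1) by rw [← mul_pow]; norm_num]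
  field_simp
  nlinarith [mul_pos (Real.rpow_pos_of_pos hr κ) hρ]

theorem rpow_mul_le_of_card_mul_le {n N : ℕ} {κ ρ r I W : ℝ} (hρ : 0 < ρ) (hρr : ρ ≤ r)
    (hκ : 1 ≤ κ) (hI : 0 ≤ I) (hNI : N * I ≤ W)
    (hN : (r + ρ) ^ (n + 1) ≤ (r - ρ) ^ (n + 1) + N * (3 * ρ) ^ (n + 1)) :
    ρ ^ (κ - (n + 1 : ℕ)) * I ≤ 6 ^ (n + 1) * ((2 * r) ^ (κ - (n + 1 : ℕ)) * W) := by
  have hr : 0 < r := hρ.trans_le hρr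
  have hW : 0 ≤ W := (by positivity : (0 : ℝ) ≤ N * I).trans hNI
  have hshell : 2 * ρ * r ^ n ≤ N * (3 * ρ) ^ (n + 1) := by
    linarith [two_mul_mul_pow_le_add_pow_sub_sub_pow hρ.le hρr n]
  refine le_of_mul_le_mul_right ?_ (by positivity : 0 < 2 * ρ * r ^ n)
  calc ρ ^ (κ - (n + 1 : ℕ)) * I * (2 * ρ * r ^ n)
      ≤ ρ ^ (κ - (n + 1 : ℕ)) * I * (N * (3 * ρ) ^ (n + 1)) := by gcongr
    _ = ρ ^ (κ - (n + 1 : ℕ)) * (3 * ρ) ^ (n + 1) * (N * I) := by ring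
    _ ≤ ρ ^ (κ - (n + 1 : ℕ)) * (3 * ρ) ^ (n + 1) * W := by gcongr
    _ ≤ 6 ^ (n + 1) * (2 * r) ^ (κ - (n + 1 : ℕ)) * (2 * ρ * r ^ n) * W :=
      mul_le_mul_of_nonneg_right (rpow_sub_mul_pow_le hρ hρr hκ) hW
    _ = 6 ^ (n + 1) * ((2 * r) ^ (κ - (n + 1 : ℕ)) * W) * (2 * ρ * r ^ n) := by ring

theorem rpow_sub_le_six_pow_mul_rpow (d : ℕ) {κ ρ : ℝ} (hκ : 0 ≤ κ) (hρ : 0 < ρ) :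
    ρ ^ (κ - d) ≤ 6 ^ d * (3 * ρ) ^ (κ - d) := by
  have h : (1 : ℝ) ≤ 6 ^ d * 3 ^ (κ - d) := by
    rw [Real.rpow_sub_natCast (by norm_num), show (6:ℝ) ^ d = 2 ^ d * 3 ^ d by
      rw [← mul_pow]; norm_num, mul_assoc, mul_div_cancel₀ _ (by positivity)]
    exact one_le_mul_of_one_le_of_one_le (one_le_pow₀ (by norm_num))
      (Real.one_le_rpow (by norm_num) hκ)
  calc ρ ^ (κ - d) ≤ 6 ^ d * 3 ^ (κ - d) * ρ ^ (κ - d) :=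
        le_mul_of_one_le_left (by positivity) h
    _ = 6 ^ d * (3 * ρ) ^ (κ - d) := by rw [Real.mul_rpow (by norm_num) hρ.le, mul_assoc]

section Radial

variable {E : Type*} [NormedAddCommGroup E] [InnerProductSpace ℝ E] [FiniteDimensional ℝ E]
  [MeasurableSpace E] [BorelSpace E]

theorem setIntegral_ball_eq_of_norm_eq {v : E → ℝ} {V : ℝ → ℝ} (hv : ∀ x, v x = V ‖x‖)
    {x y : E} (hxy : ‖x‖ = ‖y‖) (ρ : ℝ) :
    ∫ z in ball x ρ, v z = ∫ z in ball y ρ, v z := by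
  set f := Submodule.reflection (ℝ ∙ (x - y))ᗮ
  have hpre : f ⁻¹' ball y ρ = ball x ρ := by
    ext z
    rw [Set.mem_preimage, mem_ball, mem_ball, dist_eq_norm, dist_eq_norm,
      ← Submodule.reflection_sub hxy, ← map_sub, LinearIsometryEquiv.norm_map]
  have hvf : ∀ z, v (f z) = v z := fun z => by rw [hv, hv, LinearIsometryEquiv.norm_map]
  calc ∫ z in ball x ρ, v z = ∫ z in f ⁻¹' ball y ρ, v (f z) := by simp only [hpre, hvf]
    _ = ∫ z in ball y ρ, v z :=
      f.measurePreserving.setIntegral_preimage_emb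
        f.toHomeomorph.toMeasurableEquiv.measurableEmbedding _ _

variable {v : E → ℝ} {κ ρ : ℝ} {x₀ : E}

theorem rpow_mul_setIntegral_ball_le_of_norm_le (hv0 : ∀ x, 0 ≤ v x)
    (hloc : LocallyIntegrable v) (hκ : 0 ≤ κ) (hρ : 0 < ρ) (hx₀ : ‖x₀‖ ≤ 2 * ρ) :
    ρ ^ (κ - finrank ℝ E) * ∫ x in ball x₀ ρ, v x ≤
      6 ^ finrank ℝ E * ((3 * ρ) ^ (κ - finrank ℝ E) * ∫ x in ball 0 (3 * ρ), v x) := by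
  have hsub : ball x₀ ρ ⊆ ball 0 (3 * ρ) := ball_subset_ball' (by rw [dist_zero_right]; linarith)
  have hint : ∫ x in ball x₀ ρ, v x ≤ ∫ x in ball 0 (3 * ρ), v x :=
    setIntegral_mono_set
      ((hloc.integrableOn_isCompact (isCompact_closedBall 0 _)).mono_set ball_subset_closedBall)
      (.of_forall hv0) hsub.eventuallyLE
  calc ρ ^ (κ - finrank ℝ E) * ∫ x in ball x₀ ρ, v x
      ≤ 6 ^ finrank ℝ E * (3 * ρ) ^ (κ - finrank ℝ E) * ∫ x in ball 0 (3 * ρ), v x :=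
        mul_le_mul (rpow_sub_le_six_pow_mul_rpow _ hκ hρ) hint
          (setIntegral_nonneg measurableSet_ball fun x _ => hv0 x) (by positivity)
    _ = _ := mul_assoc _ _ _

theorem rpow_mul_setIntegral_ball_le_of_two_mul_lt_norm [Nontrivial E] {V : ℝ → ℝ}
    (hv0 : ∀ x, 0 ≤ v x) (hv : ∀ x, v x = V ‖x‖) (hloc : LocallyIntegrable v) (hκ : 1 ≤ κ)
    (hρ : 0 < ρ) (hx₀ : 2 * ρ < ‖x₀‖) :
    ρ ^ (κ - finrank ℝ E) * ∫ x in ball x₀ ρ, v x ≤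
      6 ^ finrank ℝ E * ((2 * ‖x₀‖) ^ (κ - finrank ℝ E) * ∫ x in ball 0 (2 * ‖x₀‖), v x) := by
  obtain ⟨n, hn⟩ := Nat.exists_eq_add_one.2 (finrank_pos (R := ℝ) (M := E))
  set r := ‖x₀‖
  obtain ⟨C, hCr, hC, hCsep, hCcov⟩ := (isCompact_sphere (0 : E) r).exists_finite_isSeparated_isCover
    (ε := (2 * ρ).toNNReal) (by simpa using hρ)
  set t := hC.toFinset
  have ht : ∀ a ∈ t, ‖a‖ = r := fun a ha => mem_sphere_zero_iff_norm.1 (hCr (hC.mem_toFinset.1 ha))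
  have hdisj : (t : Set E).PairwiseDisjoint (ball · ρ) := by
    intro a ha b hb hab
    have hsep := hCsep (hC.mem_toFinset.1 ha) (hC.mem_toFinset.1 hb) hab
    simp only [edist_dist] at hsep
    have hab : 2 * ρ < dist a b := (ENNReal.ofReal_lt_ofReal_iff_of_nonneg (by positivity)).1 hsep
    exact ball_disjoint_ball (by linarith)
  have hpack : t.card * ∫ x in ball x₀ ρ, v x ≤ ∫ x in ball 0 (2 * r), v x :=
    card_mul_le_setIntegral_of_pairwiseDisjoint (fun _ _ => measurableSet_ball) hdisj
      (fun a ha => ball_subset_ball' (by rw [dist_zero_right, ht a ha]; linarith))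
      (fun a ha => setIntegral_ball_eq_of_norm_eq hv (ht a ha) ρ) (.of_forall hv0)
      ((hloc.integrableOn_isCompact (isCompact_closedBall 0 _)).mono_set ball_subset_closedBall)
  have hcover : ball 0 (r + ρ) ⊆ closedBall 0 (r - ρ) ∪ ⋃ a ∈ t, ball a (3 * ρ) := by
    have hcov : sphere (0 : E) r ⊆ ⋃ a ∈ C, closedBall a (2 * ρ) := by
      simpa only [Real.coe_toNNReal _ (by positivity : 0 ≤ 2 * ρ)]
        using hCcov.subset_iUnion_closedBall
    simpa only [t, Set.Finite.mem_toFinset, show 2 * ρ + ρ = 3 * ρ by ring]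
      using ball_zero_subset_closedBall_union_iUnion_ball (show ρ ≤ r by linarith) hcov
  have hvol := pow_finrank_le_of_ball_subset_closedBall_union (by linarith) (by linarith)
    (by linarith) hcover
  rw [hn] at hvol ⊢
  exact rpow_mul_le_of_card_mul_le hρ (by linarith) hκ
    (setIntegral_nonneg measurableSet_ball fun x _ => hv0 x) hpack hvol

theorem exists_rpow_mul_setIntegral_ball_le [Nontrivial E] {V : ℝ → ℝ} (hv0 : ∀ x, 0 ≤ v x)
    (hv : ∀ x, v x = V ‖x‖) (hloc : LocallyIntegrable v) (hκ : 1 ≤ κ) (x₀ : E) (hρ : 0 < ρ) :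
    ∃ R > 0, ρ ^ (κ - finrank ℝ E) * ∫ x in ball x₀ ρ, v x ≤
      6 ^ finrank ℝ E * (R ^ (κ - finrank ℝ E) * ∫ x in ball 0 R, v x) := by
  rcases le_or_gt ‖x₀‖ (2 * ρ) with hnear | hfar
  · exact ⟨3 * ρ, by positivity,
      rpow_mul_setIntegral_ball_le_of_norm_le hv0 hloc (by linarith) hρ hnear⟩
  · exact ⟨2 * ‖x₀‖, by linarith,
      rpow_mul_setIntegral_ball_le_of_two_mul_lt_norm hv0 hv hloc hκ hρ hfar⟩

end Radial

/-- For radial nonnegative functions the homogeneous Morrey norm `M^{d/κ}` is equivalent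
to the supremum over balls centered at the origin. -/
theorem morrey_radial_equiv (d : ℕ) (hd : 2 ≤ d) :
    ∃ c : ℝ, c ∈ Set.Ioo (0:ℝ) 1 ∧
      ∀ κ : ℝ, κ ∈ Set.Ico (1:ℝ) (d:ℝ) →
        ∀ v : EuclideanSpace ℝ (Fin d) → ℝ, (∀ x, 0 ≤ v x) →
          (∃ V : ℝ → ℝ, ∀ x, v x = V ‖x‖) →
          LocallyIntegrable v volume →
          ENNReal.ofReal c *
              (⨆ (x₀ : EuclideanSpace ℝ (Fin d)) (ρ : ℝ) (_ : 0 < ρ),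
                ENNReal.ofReal (ρ ^ (κ - d) * ∫ x in Metric.ball x₀ ρ, v x)) ≤
            (⨆ (R : ℝ) (_ : 0 < R),
                ENNReal.ofReal (R ^ (κ - d) * ∫ x in Metric.ball (0 : EuclideanSpace ℝ (Fin d)) R, v x)) ∧
          (⨆ (R : ℝ) (_ : 0 < R),
                ENNReal.ofReal (R ^ (κ - d) * ∫ x in Metric.ball (0 : EuclideanSpace ℝ (Fin d)) R, v x)) ≤
            ⨆ (x₀ : EuclideanSpace ℝ (Fin d)) (ρ : ℝ) (_ : 0 < ρ),
              ENNReal.ofReal (ρ ^ (κ - d) * ∫ x in Metric.ball x₀ ρ, v x) := by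
  have : Nontrivial (EuclideanSpace ℝ (Fin d)) :=
    Module.nontrivial_of_finrank_pos (R := ℝ) (by rw [finrank_euclideanSpace_fin]; omega)
  refine ⟨(6 ^ d)⁻¹, ⟨by positivity, inv_lt_one_of_one_lt₀ (one_lt_pow₀ (by norm_num) (by omega))⟩,
    fun κ hκ v hv0 ⟨V, hv⟩ hloc => ⟨?_, ?_⟩⟩
  · simp only [ENNReal.mul_iSup]
    refine iSup₂_le fun x₀ ρ => iSup_le fun hρ => ?_
    obtain ⟨R, hR, hle⟩ := exists_rpow_mul_setIntegral_ball_le hv0 hv hloc hκ.1 x₀ hρ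
    rw [finrank_euclideanSpace_fin] at hle
    refine le_iSup₂_of_le R hR ?_
    rw [← ENNReal.ofReal_mul (by positivity)]
    exact ENNReal.ofReal_le_ofReal (by rwa [inv_mul_le_iff₀ (by positivity)])
  · exact iSup₂_le fun R hR => le_iSup_of_le 0 (le_iSup₂_of_le R hR le_rfl)
end

section
/- Let d ≥ 3 be an integer and α ∈ (0,2). Then for every measurable function M : [0,1] → [0,∞), ((α+2) ∫_0^1 M(r) r (1−r²)^{α/2} dr)² ≤ ((α+2)²/(d−2)) · (∫_0^1 r^{1+d}(1−r²)^{α/2} dr) · (∫_0^1 M(r)² r^{1−d} (1−r²)^{α/2−1} ((d−2) − (d−2−α) r²) dr). -/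
/-!
With `u = 1 - r²`, the product of the two weights on the right is
`M² r² u^(α-1) ((d-2) - (d-2-α) r²)`, which dominates `(d-2) M² r² u^(α-1) u = (d-2) (M r u^(α/2))²`
because the difference is `α M² r⁴ u^(α-1) ≥ 0`. Cauchy–Schwarz for lower Lebesgue integrals,
`(∫ h)² ≤ ∫ f · ∫ g` whenever `h² ≤ f g`, turns this pointwise bound into the inequality.
-/

open MeasureTheory Real
open scoped ENNReal

theorem ENNReal.lintegral_sq_le_mul_of_sq_le_mul {α : Type*} [MeasurableSpace α]
    {μ : Measure α} {f g h : α → ℝ≥0∞} (hf : AEMeasurable f μ) (hg : AEMeasurable g μ)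
    (hfgh : ∀ᵐ x ∂μ, h x ^ 2 ≤ f x * g x) :
    (∫⁻ x, h x ∂μ) ^ 2 ≤ (∫⁻ x, f x ∂μ) * ∫⁻ x, g x ∂μ := by
  have sq_sqrt : ∀ a : ℝ≥0∞, (a ^ (2⁻¹ : ℝ)) ^ 2 = a := fun a => by
    simpa using ENNReal.rpow_inv_natCast_pow two_ne_zero a
  have hle : ∀ᵐ x ∂μ, h x ≤ f x ^ (2⁻¹ : ℝ) * g x ^ (2⁻¹ : ℝ) := by
    filter_upwards [hfgh] with x hx
    rw [← ENNReal.pow_le_pow_left_iff two_ne_zero, mul_pow, sq_sqrt, sq_sqrt]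
    exact hx
  calc (∫⁻ x, h x ∂μ) ^ 2
      ≤ (∫⁻ x, f x ^ (2⁻¹ : ℝ) * g x ^ (2⁻¹ : ℝ) ∂μ) ^ 2 := by
        gcongr ?_ ^ 2; exact lintegral_mono_ae hle
    _ ≤ ((∫⁻ x, f x ∂μ) ^ (2⁻¹ : ℝ) * (∫⁻ x, g x ∂μ) ^ (2⁻¹ : ℝ)) ^ 2 := by
        gcongr
        exact ENNReal.lintegral_mul_norm_pow_le hf hg (by norm_num) (by norm_num) (by norm_num)
    _ = (∫⁻ x, f x ∂μ) * ∫⁻ x, g x ∂μ := by rw [mul_pow, sq_sqrt, sq_sqrt]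

theorem ENNReal.lintegral_sq_le_const_mul_of_sq_le_mul {α : Type*} [MeasurableSpace α]
    {μ : Measure α} {f g h : α → ℝ≥0∞} (c : ℝ≥0∞) (hf : AEMeasurable f μ)
    (hg : AEMeasurable g μ) (hfgh : ∀ᵐ x ∂μ, h x ^ 2 ≤ c * f x * g x) :
    (∫⁻ x, h x ∂μ) ^ 2 ≤ c * (∫⁻ x, f x ∂μ) * ∫⁻ x, g x ∂μ := by
  rw [← lintegral_const_mul'' c hf]
  exact ENNReal.lintegral_sq_le_mul_of_sq_le_mul (hf.const_mul c) hg hfgh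

theorem sq_moment_integrand_le {d α m r : ℝ} (hα : 0 ≤ α) (hr : r ∈ Set.Ioo 0 1) :
    (d - 2) * (m * r * (1 - r ^ 2) ^ (α / 2)) ^ 2 ≤
      r ^ (1 + d) * (1 - r ^ 2) ^ (α / 2) *
        (m ^ 2 * r ^ (1 - d) * (1 - r ^ 2) ^ (α / 2 - 1) * ((d - 2) - (d - 2 - α) * r ^ 2)) := by
  obtain ⟨hr0, hr1⟩ := hr
  have hu : 0 < 1 - r ^ 2 := by nlinarith
  have hr_pow : r ^ (1 + d) * r ^ (1 - d) = r ^ 2 := by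
    rw [← rpow_add hr0, ← rpow_natCast]; norm_num
  have hu_pow : (1 - r ^ 2) ^ (α / 2) * (1 - r ^ 2) ^ (α / 2 - 1) = (1 - r ^ 2) ^ (α - 1) := by
    rw [← rpow_add hu]; ring_nf
  have hu_sq : ((1 - r ^ 2) ^ (α / 2)) ^ 2 = (1 - r ^ 2) ^ (α - 1) * (1 - r ^ 2) := by
    rw [← rpow_natCast, ← rpow_mul hu.le, ← rpow_add_one hu.ne']; ring_nf
  calc (d - 2) * (m * r * (1 - r ^ 2) ^ (α / 2)) ^ 2
      = m ^ 2 * r ^ 2 * (1 - r ^ 2) ^ (α - 1) * ((d - 2) * (1 - r ^ 2)) := by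
        rw [mul_pow, hu_sq]; ring
    _ ≤ m ^ 2 * r ^ 2 * (1 - r ^ 2) ^ (α - 1) * ((d - 2) - (d - 2 - α) * r ^ 2) := by
        gcongr; nlinarith
    _ = m ^ 2 * (r ^ (1 + d) * r ^ (1 - d)) *
          ((1 - r ^ 2) ^ (α / 2) * (1 - r ^ 2) ^ (α / 2 - 1)) * ((d - 2) - (d - 2 - α) * r ^ 2) := by
        rw [hr_pow, hu_pow]
    _ = _ := by ring

theorem ENNReal.ofReal_sq_le_of_mul_sq_le {a b c e : ℝ} (hc : 0 < c) (hb : 0 ≤ b)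
    (h : c * a ^ 2 ≤ b * e) :
    ENNReal.ofReal a ^ 2 ≤ ENNReal.ofReal c⁻¹ * ENNReal.ofReal b * ENNReal.ofReal e := by
  calc ENNReal.ofReal a ^ 2 ≤ ENNReal.ofReal |a| ^ 2 := by gcongr; exact le_abs_self a
    _ = ENNReal.ofReal (c⁻¹ * (c * a ^ 2)) := by
        rw [← ENNReal.ofReal_pow (abs_nonneg a), sq_abs, inv_mul_cancel_left₀ hc.ne']
    _ ≤ ENNReal.ofReal (c⁻¹ * b * e) := by
        rw [mul_assoc]; gcongr
    _ = _ := by rw [ENNReal.ofReal_mul (by positivity), ENNReal.ofReal_mul (by positivity)]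

theorem cauchy_schwarz_moment_general (d : ℕ) (hd : 3 ≤ d) (α : ℝ) (hα : α ∈ Set.Ioo (0:ℝ) 2)
    (M : ℝ → ℝ) (hmeas : Measurable M) :
    (ENNReal.ofReal (α + 2) *
        ∫⁻ r in Set.Ioo (0:ℝ) 1, ENNReal.ofReal (M r * r * (1 - r ^ 2) ^ (α / 2))) ^ 2 ≤
      ENNReal.ofReal ((α + 2) ^ 2 / ((d : ℝ) - 2)) *
        (∫⁻ r in Set.Ioo (0:ℝ) 1, ENNReal.ofReal (r ^ (1 + (d : ℝ)) * (1 - r ^ 2) ^ (α / 2))) *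
        ∫⁻ r in Set.Ioo (0:ℝ) 1,
          ENNReal.ofReal ((M r) ^ 2 * r ^ ((1 : ℝ) - d) * (1 - r ^ 2) ^ (α / 2 - 1) *
            (((d : ℝ) - 2) - ((d : ℝ) - 2 - α) * r ^ 2)) := by
  have hd2 : (0 : ℝ) < d - 2 := by
    have : (3 : ℝ) ≤ d := by exact_mod_cast hd
    linarith
  rw [mul_pow, div_eq_mul_inv ((α + 2) ^ 2), ENNReal.ofReal_mul (by positivity),
    ENNReal.ofReal_pow (by linarith [hα.1]), mul_assoc (_ ^ 2), mul_assoc (_ ^ 2)]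
  gcongr
  refine ENNReal.lintegral_sq_le_const_mul_of_sq_le_mul _ (by fun_prop) (by fun_prop) ?_
  filter_upwards [ae_restrict_mem measurableSet_Ioo] with r hr
  have hu : 0 < 1 - r ^ 2 := by nlinarith [hr.1, hr.2]
  exact ENNReal.ofReal_sq_le_of_mul_sq_le hd2
    (mul_nonneg (rpow_nonneg hr.1.le _) (rpow_nonneg hu.le _))
    (sq_moment_integrand_le hα.1.le hr)

/-- Cauchy–Schwarz inequality for the radial distribution function, converting the moment
evolution inequality into a quadratic differential inequality. -/
theorem cauchy_schwarz_moment (d : ℕ) (hd : 3 ≤ d) (α : ℝ) (hα : α ∈ Set.Ioo (0:ℝ) 2)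
    (M : ℝ → ℝ) (hmeas : Measurable M) (hpos : ∀ r ∈ Set.Icc (0:ℝ) 1, 0 ≤ M r) :
    (ENNReal.ofReal (α + 2) *
        ∫⁻ r in Set.Ioo (0:ℝ) 1, ENNReal.ofReal (M r * r * (1 - r ^ 2) ^ (α / 2))) ^ 2 ≤
      ENNReal.ofReal ((α + 2) ^ 2 / ((d : ℝ) - 2)) *
        (∫⁻ r in Set.Ioo (0:ℝ) 1, ENNReal.ofReal (r ^ (1 + (d : ℝ)) * (1 - r ^ 2) ^ (α / 2))) *
        ∫⁻ r in Set.Ioo (0:ℝ) 1,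
          ENNReal.ofReal ((M r) ^ 2 * r ^ ((1 : ℝ) - d) * (1 - r ^ 2) ^ (α / 2 - 1) *
            (((d : ℝ) - 2) - ((d : ℝ) - 2 - α) * r ^ 2)) :=
  cauchy_schwarz_moment_general d hd α hα M hmeas
end
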